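/- In a closed symmetric monoidal category, an object x is dualizable if and only if x is reflexive and its dual Dx is dualizable. -/

import Mathlib

open CategoryTheory CategoryTheory.MonoidalCategory CategoryTheory.MonoidalClosed

universe v u

variable {C : Type u} [Category.{v} C] [MonoidalCategory C] [SymmetricCategory C]
  [MonoidalClosed C]

/-- The internal dual `D x = hom(x, 𝟙)`. -/
noncomputable def dualObj (x : C) : C := (ihom x).obj (𝟙_ C)

/-- The action of the dual functor on morphisms. -/
noncomputable def dualMap {x y : C} (f : x ⟶ y) : dualObj y ⟶ dualObj x :=
  (MonoidalClosed.pre f).app (𝟙_ C)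

/-- The evaluation morphism `ε : D x ⊗ x ⟶ 𝟙`. -/
noncomputable def epsilonMap (x : C) : dualObj x ⊗ x ⟶ 𝟙_ C :=
  (β_ (dualObj x) x).hom ≫ (ihom.ev x).app (𝟙_ C)

/-- The canonical map `eval_x : x ⟶ D (D x)`. -/
noncomputable def evalMap (x : C) : x ⟶ dualObj (dualObj x) :=
  MonoidalClosed.curry (epsilonMap x)

/-- `x` is dualizable: there is a coevaluation `c : 𝟙 ⟶ x ⊗ D x` satisfying the two
triangle (zigzag) identities with the evaluation `ε : D x ⊗ x ⟶ 𝟙`. -/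
def Dualizable (x : C) : Prop :=
  ∃ c : 𝟙_ C ⟶ x ⊗ dualObj x,
    (λ_ x).inv ≫ (c ▷ x) ≫ (α_ x (dualObj x) x).hom ≫ (x ◁ epsilonMap x) ≫ (ρ_ x).hom =
      𝟙 x ∧
    (ρ_ (dualObj x)).inv ≫ (dualObj x ◁ c) ≫ (α_ (dualObj x) x (dualObj x)).inv ≫
      (epsilonMap x ▷ dualObj x) ≫ (λ_ (dualObj x)).hom = 𝟙 (dualObj x)

/-! A coevaluation for `x` is the same as an exact pairing of `x` and `D x` whose evaluation is
the canonical `ε_x : D x ⊗ x ⟶ 𝟙`. By Yoneda, such a pairing makes `eval_x = curry ε_x`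
invertible: precomposition with it is the bijection `(T ⟶ x) ≃ (D x ⊗ T ⟶ 𝟙) ≃ (T ⟶ D D x)`.
Using the symmetry, the pairing can be swapped to one of `D x` and `x`, and transported along
`eval_x : x ≅ D D x` to one of `D x` and `D D x`; conversely a pairing of `D x` and `D D x` is
swapped and transported back. The evaluations come out canonical because
`eval_x ▷ D x ≫ ε_{D x} = β ≫ ε_x`. -/

section

variable {C : Type u} [Category.{v} C] [MonoidalCategory C]

theorem exists_exactPairing_iff {X Y : C} (e : Y ⊗ X ⟶ 𝟙_ C) :
    (∃ _ : ExactPairing X Y, ε_ X Y = e) ↔ ∃ c : 𝟙_ C ⟶ X ⊗ Y,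
      (λ_ X).inv ≫ c ▷ X ≫ (α_ X Y X).hom ≫ X ◁ e ≫ (ρ_ X).hom = 𝟙 X ∧
      (ρ_ Y).inv ≫ Y ◁ c ≫ (α_ Y X Y).inv ≫ e ▷ Y ≫ (λ_ Y).hom = 𝟙 Y := by
  constructor
  · rintro ⟨p, rfl⟩
    exact ⟨η_ X Y, by simp, by simp⟩
  · rintro ⟨c, h₁, h₂⟩
    refine ⟨⟨c, e, ?_, ?_⟩, rfl⟩
    · rw [← cancel_epi (ρ_ Y).inv, ← cancel_mono (λ_ Y).hom]; simpa using h₂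
    · rw [← cancel_epi (λ_ X).inv, ← cancel_mono (ρ_ X).hom]; simpa using h₁

variable [MonoidalClosed C]

theorem isIso_curry_evaluation (X Y : C) [ExactPairing X Y] :
    IsIso (MonoidalClosed.curry (ε_ X Y)) := by
  refine isIso_of_yoneda_map_bijective _ fun T => ?_
  convert (((Iso.refl T).homCongr (ρ_ X).symm).trans
    ((tensorLeftHomEquiv T X Y (𝟙_ C)).symm.trans ((ihom.adjunction Y).homEquiv T _))).bijective
  simp [tensorLeftHomEquiv, ← curry_natural_left, unitors_equal]
  rfl

end

theorem dualizable_iff_exists_exactPairing (x : C) :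
    Dualizable x ↔ ∃ _ : ExactPairing x (dualObj x), ε_ x (dualObj x) = epsilonMap x :=
  (exists_exactPairing_iff _).symm

theorem whiskerRight_evalMap_epsilonMap (x : C) :
    evalMap x ▷ dualObj x ≫ epsilonMap (dualObj x) = (β_ x (dualObj x)).hom ≫ epsilonMap x := by
  have h : dualObj x ◁ evalMap x ≫ (ihom.ev (dualObj x)).app (𝟙_ C) = epsilonMap x :=
    uncurry_curry (epsilonMap x)
  calc _ = (β_ x (dualObj x)).hom ≫ dualObj x ◁ evalMap x ≫ (ihom.ev (dualObj x)).app (𝟙_ C) :=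
        BraidedCategory.braiding_naturality_left_assoc _ _ _
    _ = _ := by rw [h]

namespace Dualizable

variable {x : C}

theorem isIso_evalMap (h : Dualizable x) : IsIso (evalMap x) := by
  obtain ⟨_, hε⟩ := (dualizable_iff_exists_exactPairing x).1 h
  rw [evalMap, ← hε]
  exact isIso_curry_evaluation _ _

theorem dual (h : Dualizable x) : Dualizable (dualObj x) := by
  obtain ⟨_, hε⟩ := (dualizable_iff_exists_exactPairing x).1 h
  have := h.isIso_evalMap
  let := BraidedCategory.exactPairing_swap x (dualObj x)
  refine (dualizable_iff_exists_exactPairing _).2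
    ⟨exactPairingCongrRight (asIso (evalMap x)).symm, ?_⟩
  show inv (evalMap x) ▷ _ ≫ (β_ _ _).hom ≫ ε_ _ _ = _
  rw [hε, ← whiskerRight_evalMap_epsilonMap]
  simp

theorem of_dual (hx : IsIso (evalMap x)) (h : Dualizable (dualObj x)) : Dualizable x := by
  obtain ⟨_, hε⟩ := (dualizable_iff_exists_exactPairing _).1 h
  let := BraidedCategory.exactPairing_swap (dualObj x) (dualObj (dualObj x))
  refine (dualizable_iff_exists_exactPairing _).2 ⟨exactPairingCongrLeft (asIso (evalMap x)), ?_⟩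
  show _ ◁ evalMap x ≫ (β_ _ _).hom ≫ ε_ _ _ = _
  rw [hε, BraidedCategory.braiding_naturality_right_assoc, whiskerRight_evalMap_epsilonMap,
    SymmetricCategory.symmetry_assoc]

end Dualizable

/-- `x` is dualizable iff `x` is reflexive and `D x` is dualizable. -/
theorem stmt8 (x : C) :
    Dualizable x ↔ (IsIso (evalMap x) ∧ Dualizable (dualObj x)) :=
  ⟨fun h => ⟨h.isIso_evalMap, h.dual⟩, fun ⟨hx, h⟩ => .of_dual hx h⟩
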